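/- Let g be a positive integer and S a numerical semigroup, and let T = ⟨L(S)⟩. Then every descendant S' of S (including S itself) has genus g(S') ≤ g if and only if T is a numerical semigroup (i.e., gcd(L(S)) = 1) and g(T) ≤ g. -/

import Mathlib

/-- A numerical semigroup: a cofinite additive submonoid of ℕ containing 0. -/
def IsNumericalSemigroup (S : Set ℕ) : Prop :=
  0 ∈ S ∧ (∀ a ∈ S, ∀ b ∈ S, a + b ∈ S) ∧ Sᶜ.Finite

/-- The nsConductor: least `c` such that every `n ≥ c` belongs to `S`. -/
noncomputable def nsConductor (S : Set ℕ) : ℕ :=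
  sInf {c : ℕ | ∀ n : ℕ, c ≤ n → n ∈ S}

/-- The genus: number of gaps. -/
noncomputable def genus (S : Set ℕ) : ℕ := Sᶜ.ncard

/-- The Frobenius number: largest integer not in `S` (for `S ≠ ℕ`). -/
noncomputable def nsFrobenius (S : Set ℕ) : ℕ := sSup Sᶜ

/-- The multiplicity: least positive element of `S`. -/
noncomputable def mult (S : Set ℕ) : ℕ := sInf {n : ℕ | n ∈ S ∧ n ≠ 0}

/-- `p` is a minimal generator (primitive) of `S`: nonzero element of `S` that is
not a sum of two nonzero elements of `S`. -/
def IsPrimitive (S : Set ℕ) (p : ℕ) : Prop :=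
  p ∈ S ∧ p ≠ 0 ∧ ∀ a ∈ S, ∀ b ∈ S, a ≠ 0 → b ≠ 0 → a + b ≠ p

/-- The set of minimal generators of `S`. -/
def primitives (S : Set ℕ) : Set ℕ := {p | IsPrimitive S p}

/-- The embedding dimension: number of minimal generators. -/
noncomputable def edim (S : Set ℕ) : ℕ := (primitives S).ncard

/-- The left elements: elements of `S` strictly below the nsConductor. -/
def lefts (S : Set ℕ) : Set ℕ := {s ∈ S | s < nsConductor S}

/-- The additive submonoid of ℕ generated by a set, viewed as a set. -/
def genBy (X : Set ℕ) : Set ℕ := (AddSubmonoid.closure X : Set ℕ)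

/-- `T` is a child of `S`: obtained by removing one big primitive. -/
def ChildOf (S T : Set ℕ) : Prop :=
  ∃ p : ℕ, IsPrimitive S p ∧ nsConductor S ≤ p ∧ T = S \ {p}

/-- `T` is a descendant of `S` (possibly `T = S`): obtained by finitely many
removals of big primitives. -/
def DescendantOf (S T : Set ℕ) : Prop :=
  Relation.ReflTransGen (fun A B => ChildOf A B) S T

/-- The gcd of the set `X` equals `1`: the only common divisor of all elements is `1`. -/
def SetGcdOne (X : Set ℕ) : Prop :=
  ∀ d : ℕ, (∀ x ∈ X, d ∣ x) → d = 1

/-!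
The descendants of `S` are exactly the numerical semigroups `S'` with `L(S) ⊆ S' ⊆ S`: removing
the least element of `S \ S'` is always a legal step towards `S'`. If `gcd L(S) = 1`, then
`⟨L(S)⟩` is the smallest of them and so has the largest genus. Otherwise `⟨L(S)⟩` misses
infinitely many integers, and `⟨L(S)⟩ ∪ [N, ∞)` is a descendant of arbitrarily large genus.
-/

section Conductor

variable {S T : Set ℕ}

lemma mem_of_nsConductor_le (hS : Sᶜ.Finite) {n : ℕ} (hn : nsConductor S ≤ n) : n ∈ S := by
  obtain ⟨B, hB⟩ := hS.bddAbove
  have hne : {c : ℕ | ∀ n : ℕ, c ≤ n → n ∈ S}.Nonempty :=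
    ⟨B + 1, fun n hn => by_contra fun h => absurd (hB h) (by omega)⟩
  exact Nat.sInf_mem hne n hn

lemma nsConductor_le_of_forall_mem {c : ℕ} (h : ∀ n, c ≤ n → n ∈ S) : nsConductor S ≤ c :=
  Nat.sInf_le h

lemma nsConductor_mono (hT : Tᶜ.Finite) (hTS : T ⊆ S) : nsConductor S ≤ nsConductor T :=
  nsConductor_le_of_forall_mem fun _ hn => hTS (mem_of_nsConductor_le hT hn)

lemma nsConductor_diff_singleton_le (hS : Sᶜ.Finite) {p : ℕ} (hp : nsConductor S ≤ p) :
    nsConductor (S \ {p}) ≤ p + 1 :=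
  nsConductor_le_of_forall_mem fun n hn =>
    ⟨mem_of_nsConductor_le hS (by omega), by simp only [Set.mem_singleton_iff]; omega⟩

end Conductor

lemma genus_le_genus {S T : Set ℕ} (hT : Tᶜ.Finite) (hTS : T ⊆ S) : genus S ≤ genus T :=
  Set.ncard_le_ncard (Set.compl_subset_compl.mpr hTS) hT

lemma compl_union_Ici_finite (T : Set ℕ) (N : ℕ) : (T ∪ Set.Ici N)ᶜ.Finite :=
  (Set.finite_Iio N).subset fun n hn => by
    simp only [Set.compl_union, Set.mem_inter_iff, Set.mem_compl_iff, Set.mem_Ici] at hn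
    exact Set.mem_Iio.mpr (not_le.mp hn.2)

lemma IsNumericalSemigroup.diff_singleton {S : Set ℕ} (hS : IsNumericalSemigroup S) {p : ℕ}
    (hp : IsPrimitive S p) : IsNumericalSemigroup (S \ {p}) := by
  obtain ⟨h0, hadd, hfin⟩ := hS
  obtain ⟨-, hp0, hirr⟩ := hp
  refine ⟨⟨h0, Ne.symm hp0⟩, fun a ⟨ha, hap⟩ b ⟨hb, hbp⟩ => ⟨hadd a ha b hb, ?_⟩, ?_⟩
  · simp only [Set.mem_singleton_iff] at hap hbp ⊢
    intro hab
    exact hirr a ha b hb (by rintro rfl; omega) (by rintro rfl; omega) hab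
  · rw [Set.compl_sdiff]
    exact (Set.finite_singleton p).union hfin

lemma IsNumericalSemigroup.genBy_subset {X A : Set ℕ} (hA : IsNumericalSemigroup A)
    (hXA : X ⊆ A) : genBy X ⊆ A :=
  (AddSubmonoid.closure_le (S := ⟨⟨A, fun ha hb => hA.2.1 _ ha _ hb⟩, hA.1⟩)).2 hXA

lemma isNumericalSemigroup_genBy {X : Set ℕ} (h : (genBy X)ᶜ.Finite) :
    IsNumericalSemigroup (genBy X) :=
  ⟨(AddSubmonoid.closure X).zero_mem, fun _ ha _ hb => (AddSubmonoid.closure X).add_mem ha hb, h⟩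

lemma isNumericalSemigroup_genBy_union_Ici (X : Set ℕ) (N : ℕ) :
    IsNumericalSemigroup (genBy X ∪ Set.Ici N) := by
  refine ⟨Or.inl (AddSubmonoid.closure X).zero_mem, ?_, compl_union_Ici_finite _ N⟩
  rintro a (ha | ha) b (hb | hb)
  · exact Or.inl ((AddSubmonoid.closure X).add_mem ha hb)
  all_goals exact Or.inr (by simp only [Set.mem_Ici] at *; omega)

lemma setGcdOne_iff {X : Set ℕ} : SetGcdOne X ↔ Nat.setGcd X = 1 :=
  ⟨fun h => h _ fun _ => Nat.setGcd_dvd_of_mem,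
    fun h _ hd => Nat.dvd_one.mp (h ▸ Nat.dvd_setGcd_iff.mpr hd)⟩

lemma genBy_compl_finite_iff {X : Set ℕ} : (genBy X)ᶜ.Finite ↔ SetGcdOne X := by
  rw [setGcdOne_iff]
  constructor
  · intro h
    obtain ⟨B, hB⟩ := h.bddAbove
    have hdvd : ∀ n, B < n → Nat.setGcd X ∣ n := fun n hn =>
      Nat.setGcd_dvd_of_mem_closure (by_contra fun h' => absurd (hB h') (by omega))
    exact Nat.dvd_one.mp
      ((Nat.dvd_add_right (hdvd (B + 1) (by omega))).mp (hdvd (B + 2) (by omega)))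
  · intro h
    obtain ⟨n, hn⟩ := Nat.exists_mem_closure_of_ge X
    exact (Set.finite_Iio n).subset fun m hm =>
      not_le.mp fun hle => hm (hn m hle (h ▸ one_dvd m))

lemma exists_lt_genus_union_Ici {T : Set ℕ} (hT : Tᶜ.Infinite) (g c : ℕ) :
    ∃ N, c ≤ N ∧ g < genus (T ∪ Set.Ici N) := by
  obtain ⟨F, hFT, hF, hcard⟩ := hT.exists_subset_ncard_eq (g + 1)
  obtain ⟨B, hB⟩ := hF.bddAbove
  refine ⟨max c (B + 1), le_max_left _ _, ?_⟩
  have hFsub : F ⊆ (T ∪ Set.Ici (max c (B + 1)))ᶜ := fun x hx => by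
    have hxB := hB hx
    simp only [Set.compl_union, Set.mem_inter_iff, Set.mem_compl_iff, Set.mem_Ici]
    exact ⟨hFT hx, by omega⟩
  calc g < F.ncard := by omega
    _ ≤ genus (T ∪ Set.Ici (max c (B + 1))) :=
      Set.ncard_le_ncard hFsub (compl_union_Ici_finite _ _)

section Descendants

variable {S S' : Set ℕ}

lemma descendantOf_of_lefts_subset (hS : IsNumericalSemigroup S)
    (hS' : IsNumericalSemigroup S') (hleft : lefts S ⊆ S') (hsub : S' ⊆ S) :
    DescendantOf S S' := by
  induction hn : (S \ S').ncard using Nat.strong_induction_on generalizing S with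
  | _ n ih =>
  obtain hempty | hne := (S \ S').eq_empty_or_nonempty
  · rw [hsub.antisymm (Set.sdiff_eq_empty.mp hempty)]
    exact .refl
  set p := sInf (S \ S')
  obtain ⟨hpS, hpS'⟩ : p ∈ S \ S' := Nat.sInf_mem hne
  have hlt_mem : ∀ x ∈ S, x < p → x ∈ S' := fun x hx hxp =>
    by_contra fun h => Nat.notMem_of_lt_sInf hxp ⟨hx, h⟩
  have hpc : nsConductor S ≤ p := not_lt.mp fun h => hpS' (hleft ⟨hpS, h⟩)
  have hprim : IsPrimitive S p := ⟨hpS, fun h0 => hpS' (h0 ▸ hS'.1),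
    fun a ha b hb ha0 hb0 hab => hpS' (hab ▸ hS'.2.1 a (hlt_mem a ha (by omega))
      b (hlt_mem b hb (by omega)))⟩
  refine .head ⟨p, hprim, hpc, rfl⟩ (ih _ ?_ (hS.diff_singleton hprim) ?_ ?_ rfl)
  · rw [← hn, Set.sdiff_sdiff_comm]
    exact Set.ncard_sdiff_singleton_lt_of_mem ⟨hpS, hpS'⟩ (hS'.2.2.subset fun _ hx => hx.2)
  · rintro x ⟨⟨hx, hxp⟩, hxc⟩
    have := nsConductor_diff_singleton_le hS.2.2 hpc
    simp only [Set.mem_singleton_iff] at hxp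
    exact hlt_mem x hx (by omega)
  · exact fun x hx => ⟨hsub hx, fun h => hpS' ((Set.mem_singleton_iff.mp h) ▸ hx)⟩

lemma descendantOf_iff (hS : IsNumericalSemigroup S) :
    DescendantOf S S' ↔ IsNumericalSemigroup S' ∧ lefts S ⊆ S' ∧ S' ⊆ S := by
  refine ⟨fun h => ?_, fun ⟨hS', hleft, hsub⟩ => descendantOf_of_lefts_subset hS hS' hleft hsub⟩
  induction h with
  | refl => exact ⟨hS, fun _ hx => hx.1, subset_rfl⟩
  | @tail M _ _ hchild ih =>
    obtain ⟨hM, hleftM, hMS⟩ := ih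
    obtain ⟨p, hp, hpc, rfl⟩ := hchild
    refine ⟨hM.diff_singleton hp, fun x hx => ⟨hleftM hx, ?_⟩, Set.sdiff_subset.trans hMS⟩
    have hx := hx.2
    have := nsConductor_mono hM.2.2 hMS
    simp only [Set.mem_singleton_iff]
    omega

end Descendants

theorem stmt16_general (g : ℕ) (S : Set ℕ) (hS : IsNumericalSemigroup S) :
    (∀ S' : Set ℕ, DescendantOf S S' → genus S' ≤ g) ↔
      SetGcdOne (lefts S) ∧ genus (genBy (lefts S)) ≤ g := by
  simp only [descendantOf_iff hS, ← genBy_compl_finite_iff]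
  have hleft : lefts S ⊆ genBy (lefts S) := AddSubmonoid.subset_closure
  have hTS : genBy (lefts S) ⊆ S := hS.genBy_subset fun _ hx => hx.1
  constructor
  · intro h
    have hfin : (genBy (lefts S))ᶜ.Finite := by
      by_contra hinf
      obtain ⟨N, hN, hgN⟩ := exists_lt_genus_union_Ici hinf g (nsConductor S)
      have hsub : genBy (lefts S) ∪ Set.Ici N ⊆ S :=
        Set.union_subset hTS fun n hn => mem_of_nsConductor_le hS.2.2 (hN.trans hn)
      exact hgN.not_ge (h _ ⟨isNumericalSemigroup_genBy_union_Ici _ N,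
        hleft.trans Set.subset_union_left, hsub⟩)
    exact ⟨hfin, h _ ⟨isNumericalSemigroup_genBy hfin, hleft, hTS⟩⟩
  · rintro ⟨hfin, hgT⟩ S' ⟨hS', hleftS', -⟩
    exact (genus_le_genus hfin (hS'.genBy_subset hleftS')).trans hgT

theorem stmt16 (g : ℕ) (hg : 0 < g) (S : Set ℕ) (hS : IsNumericalSemigroup S) :
    (∀ S' : Set ℕ, DescendantOf S S' → genus S' ≤ g) ↔
      SetGcdOne (lefts S) ∧ genus (genBy (lefts S)) ≤ g :=
  stmt16_general g S hS
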